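/- Let n ∈ {2,3,...} and α ∈ [1/n, 1]. Then for every r > 0, E_α(r) ≥ (1/r^{n-1}) E_{α,α}(r) − (1/r^{n-1}) ∑_{k=0}^{⌊n-1+1/(2α)⌋} λ_k r^k + (1/r^{n-1}) ∑_{k=n-1}^{⌊n-1+1/(2α)⌋} β_k r^k, where λ_k := 1/Γ(α+kα) and β_k := 1/Γ(1+kα−α(n−1)). -/

import Mathlib

open Real Filter Topology

/-- The two-parameter Mittag-Leffler function `E_{α,β}(z) = ∑ z^n / Γ(αn+β)`. -/
noncomputable def ML (a b z : ℝ) : ℝ :=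
  ∑' n : ℕ, z ^ n / Real.Gamma (a * n + b)

/-!
Multiplying by `r^(n-1)`, the inequality says that the tail `∑_{k>N} r^k / Γ(α + kα)` of
`E_{α,α}(r)` is dominated by the tail `∑_{k>N} r^k / Γ(1 + (k-n+1)α)` of `r^(n-1) E_α(r)`,
where `N = ⌊n - 1 + 1/(2α)⌋`. Termwise this is `Γ(1 + (k-n+1)α) ≤ Γ(α + kα)`: for `k > N` both
arguments are at least `3/2`, the second exceeds the first because `nα ≥ 1`, and `Γ` is
increasing on `[3/2, ∞)`, being convex with `Γ'(3/2) = (√π/2)(2 - γ - 2 log 2) > 0`.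
-/

lemma ConvexOn.monotoneOn_inter_Ici_of_hasDerivAt_nonneg {S : Set ℝ} {f : ℝ → ℝ} {a d : ℝ}
    (hf : ConvexOn ℝ S f) (ha : a ∈ S) (hd : HasDerivAt f d a) (hd₀ : 0 ≤ d) :
    MonotoneOn f (S ∩ Set.Ici a) := by
  rintro x ⟨hxS, hax : a ≤ x⟩ y ⟨hyS, -⟩ hxy
  rcases hxy.eq_or_lt with rfl | hxy
  · rfl
  refine (slope_nonneg_iff_of_le hxy.le).1 (hd₀.trans ?_)
  rcases hax.eq_or_lt with rfl | hax
  · exact hf.le_slope_of_hasDerivAt ha hyS hxy hd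
  · refine (hf.le_slope_of_hasDerivAt ha hxS hax hd).trans ?_
    simpa only [slope_def_field] using hf.slope_mono_adjacent ha hyS hax hxy

namespace Real

lemma eulerMascheroniConstant_add_two_mul_log_two_lt_two :
    eulerMascheroniConstant + 2 * log 2 < 2 := by
  have hγ : eulerMascheroniConstant < harmonic 16 - 4 * log 2 := by
    have h := eulerMascheroniConstant_lt_eulerMascheroniSeq' 16
    rwa [eulerMascheroniSeq', if_neg (by norm_num),
      show ((16 : ℕ) : ℝ) = 2 ^ 4 by norm_num, log_pow, Nat.cast_ofNat] at h
  have hH : (harmonic 16 : ℝ) < 3.3808 := by norm_num [harmonic, Finset.sum_range_succ]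
  linarith [log_two_gt_d9]

lemma hasDerivAt_Gamma_three_halves :
    HasDerivAt Gamma (√π / 2 * (2 - eulerMascheroniConstant - 2 * log 2)) (3 / 2) := by
  have hmul : HasDerivAt (fun x => x * Gamma x)
      (1 * Gamma (1 / 2) + 1 / 2 * (-√π * (eulerMascheroniConstant + 2 * log 2))) (1 / 2) :=
    (hasDerivAt_id _).mul hasDerivAt_Gamma_one_half
  have hshift : (fun x => x * Gamma x) =ᶠ[𝓝 (1 / 2)] fun x => Gamma (x + 1) :=
    (eventually_ne_nhds one_half_pos.ne').mono fun x hx => (Gamma_add_one hx).symm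
  have h := HasDerivAt.comp_sub_const (3 / 2 : ℝ) 1 (by
    rw [show (3 / 2 : ℝ) - 1 = 1 / 2 by norm_num]; exact hmul.congr_of_eventuallyEq hshift.symm)
  rw [Gamma_one_half_eq] at h
  norm_num at h
  exact h.congr_deriv (by ring)

lemma monotoneOn_Gamma_Ici_three_halves : MonotoneOn Gamma (Set.Ici (3 / 2)) := by
  have hd : 0 ≤ √π / 2 * (2 - eulerMascheroniConstant - 2 * log 2) := by
    have hlt := eulerMascheroniConstant_add_two_mul_log_two_lt_two
    exact mul_nonneg (by positivity) (by linarith)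
  have h := convexOn_Gamma.monotoneOn_inter_Ici_of_hasDerivAt_nonneg (by norm_num)
    hasDerivAt_Gamma_three_halves hd
  rwa [Set.inter_eq_right.2 (Set.Ici_subset_Ioi.2 (by norm_num))] at h

lemma Gamma_mul_rpow_le_Gamma_add {x a : ℝ} (hx : 1 < x) (ha : 0 < a) :
    Gamma x * (x - 1) ^ a ≤ Gamma (x + a) := by
  have hx₁ : 0 < x - 1 := sub_pos.2 hx
  have hΓ : 0 < Gamma x := Gamma_pos_of_pos (by linarith)
  have hrec : log (Gamma x) - log (Gamma (x - 1)) = log (x - 1) := by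
    have h := Gamma_add_one hx₁.ne'
    rw [sub_add_cancel] at h
    rw [h, log_mul hx₁.ne' (Gamma_pos_of_pos hx₁).ne', add_sub_cancel_right]
  -- log-convexity: the slope `log (x - 1)` of `log ∘ Γ` on `[x - 1, x]` is at most
  -- its slope on `[x, x + a]`
  have hslope := convexOn_log_Gamma.slope_mono_adjacent (y := x) hx₁ (show 0 < x + a by linarith)
    (sub_one_lt x) (lt_add_of_pos_right x ha)
  simp only [Function.comp_apply, sub_sub_cancel, add_sub_cancel_left, div_one, hrec,
    le_div_iff₀ ha] at hslope
  refine (log_le_log_iff (by positivity) (Gamma_pos_of_pos (by linarith))).1 ?_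
  rw [log_mul hΓ.ne' (rpow_pos_of_pos hx₁ a).ne', log_rpow hx₁]
  linarith

end Real

lemma summable_pow_div_Gamma_mul_add {a : ℝ} (ha : 0 < a) (b z : ℝ) :
    Summable fun k : ℕ => z ^ k / Gamma (a * k + b) := by
  have hlin : Tendsto (fun k : ℕ => a * k + b - 1) atTop atTop :=
    tendsto_atTop_add_const_right _ _
      (tendsto_atTop_add_const_right _ _ (tendsto_natCast_atTop_atTop.const_mul_atTop ha))
  refine summable_of_ratio_norm_eventually_le (r := 1 / 2) (by norm_num) ?_
  filter_upwards [hlin.eventually_gt_atTop 0,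
    ((tendsto_rpow_atTop ha).comp hlin).eventually_ge_atTop (2 * |z|)] with k hx hz
  set x := a * k + b
  have hx₁ : 1 < x := by linarith
  have hΓ : 0 < Gamma x := Gamma_pos_of_pos (by linarith)
  have hpow : 0 < (x - 1) ^ a := rpow_pos_of_pos hx a
  have hshift : a * ((k + 1 : ℕ) : ℝ) + b = x + a := by push_cast; ring
  simp only [hshift, norm_div, norm_pow, Real.norm_eq_abs, abs_of_pos hΓ, abs_mul, abs_pow,
    abs_of_pos (Gamma_pos_of_pos (show 0 < x + a by linarith)), pow_succ]
  calc |z| ^ k * |z| / Gamma (x + a) ≤ |z| ^ k * |z| / (Gamma x * (x - 1) ^ a) := by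
        gcongr
        exact Gamma_mul_rpow_le_Gamma_add hx₁ ha
    _ = |z| ^ k / Gamma x * (|z| / (x - 1) ^ a) := by ring
    _ ≤ |z| ^ k / Gamma x * (1 / 2) := by
        refine mul_le_mul_of_nonneg_left ?_ (by positivity)
        rw [div_le_iff₀ hpow]
        simp only [Function.comp_apply] at hz
        linarith
    _ = 1 / 2 * (|z| ^ k / Gamma x) := mul_comm _ _

lemma ML_sub_sum_range_eq_tsum {a : ℝ} (ha : 0 < a) (b z : ℝ) (M : ℕ) :
    ML a b z - ∑ k ∈ Finset.range M, z ^ k / Gamma (a * k + b) =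
      ∑' k : ℕ, z ^ (k + M) / Gamma (a * ↑(k + M) + b) := by
  rw [ML, ← (summable_pow_div_Gamma_mul_add ha b z).sum_add_tsum_nat_add M, add_sub_cancel_left]

lemma ML_sub_sum_range_le_pow_mul {a r : ℝ} (ha : 0 < a) (hr : 0 ≤ r) {m L : ℕ}
    (hm : 1 ≤ a * (m + 1)) (hL : 1 / 2 ≤ a * L) :
    ML a a r - ∑ k ∈ Finset.range (L + m), r ^ k / Gamma (a * k + a) ≤
      r ^ m * (ML a 1 r - ∑ k ∈ Finset.range L, r ^ k / Gamma (a * k + 1)) := by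
  rw [ML_sub_sum_range_eq_tsum ha, ML_sub_sum_range_eq_tsum ha, ← tsum_mul_left]
  refine Summable.tsum_le_tsum (fun k => ?_)
    ((summable_nat_add_iff _).2 (summable_pow_div_Gamma_mul_add ha a r))
    (((summable_nat_add_iff _).2 (summable_pow_div_Gamma_mul_add ha 1 r)).mul_left _)
  have hx : 3 / 2 ≤ a * ↑(k + L) + 1 := by
    push_cast
    nlinarith [(Nat.cast_nonneg k : (0 : ℝ) ≤ k)]
  have hxy : a * ↑(k + L) + 1 ≤ a * ↑(k + (L + m)) + a := by
    push_cast
    linarith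
  rw [mul_div_assoc', ← pow_add, show m + (k + L) = k + (L + m) by ring]
  exact div_le_div_of_nonneg_left (pow_nonneg hr _) (Gamma_pos_of_pos (by linarith))
    (monotoneOn_Gamma_Ici_three_halves hx (hx.trans hxy) hxy)

lemma sum_Icc_pow_div_Gamma_shift (a r : ℝ) (m N : ℕ) :
    ∑ k ∈ Finset.Icc m N, 1 / Gamma (1 + k * a - a * m) * r ^ k =
      r ^ m * ∑ k ∈ Finset.range (N + 1 - m), r ^ k / Gamma (a * k + 1) := by
  rw [← Finset.Ico_add_one_right_eq_Icc, Finset.sum_Ico_eq_sum_range, Finset.mul_sum]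
  refine Finset.sum_congr rfl fun k _ => ?_
  rw [Nat.cast_add, show 1 + (m + k : ℝ) * a - a * m = a * k + 1 by ring, pow_add]
  ring

theorem stmt5_general (n : ℕ) (hn : 2 ≤ n) (α : ℝ) (hα1 : 1 / (n : ℝ) ≤ α)
    (r : ℝ) (hr : 0 < r) :
    ML α 1 r ≥ (1 / r ^ (n - 1)) * ML α α r
      - (1 / r ^ (n - 1)) * ∑ k ∈ Finset.range (⌊(n : ℝ) - 1 + 1 / (2 * α)⌋.toNat + 1),
          (1 / Real.Gamma (α + k * α)) * r ^ k
      + (1 / r ^ (n - 1)) * ∑ k ∈ Finset.Icc (n - 1) ⌊(n : ℝ) - 1 + 1 / (2 * α)⌋.toNat,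
          (1 / Real.Gamma (1 + k * α - α * ((n : ℝ) - 1))) * r ^ k := by
  obtain ⟨m, rfl⟩ : ∃ m, n = m + 1 := ⟨n - 1, by omega⟩
  have hα : 0 < α := lt_of_lt_of_le (by positivity) hα1
  have hαn : 1 ≤ α * (m + 1) := by
    rw [div_le_iff₀ (by positivity)] at hα1
    push_cast at hα1
    linarith
  rw [show ((m + 1 : ℕ) : ℝ) - 1 = m by push_cast; ring, Nat.add_sub_cancel, Int.floor_toNat]
  set N := ⌊(m : ℝ) + 1 / (2 * α)⌋₊
  have hmN : m ≤ N := Nat.le_floor (le_add_of_nonneg_right (by positivity))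
  have hL : 1 / 2 ≤ α * ↑(N + 1 - m) := by
    have := Nat.lt_floor_add_one ((m : ℝ) + 1 / (2 * α))
    rw [Nat.cast_sub (by omega)]
    push_cast
    have h2 : α * (1 / (2 * α)) = 1 / 2 := by field_simp
    nlinarith
  have htail := ML_sub_sum_range_le_pow_mul hα hr.le hαn hL
  rw [Nat.sub_add_cancel (by omega : m ≤ N + 1)] at htail
  have hF : ∑ k ∈ Finset.range (N + 1), 1 / Gamma (α + k * α) * r ^ k =
      ∑ k ∈ Finset.range (N + 1), r ^ k / Gamma (α * k + α) :=
    Finset.sum_congr rfl fun k _ => by rw [one_div_mul_eq_div, add_comm, mul_comm α]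
  rw [hF, sum_Icc_pow_div_Gamma_shift, ge_iff_le]
  have hrm : 0 < r ^ m := pow_pos hr m
  calc _ = (ML α α r - ∑ k ∈ Finset.range (N + 1), r ^ k / Gamma (α * k + α)) / r ^ m +
        ∑ k ∈ Finset.range (N + 1 - m), r ^ k / Gamma (α * k + 1) := by
        field_simp
    _ ≤ ML α 1 r := by
        rw [← le_sub_iff_add_le, div_le_iff₀ hrm, mul_comm]
        exact htail

theorem stmt5 (n : ℕ) (hn : 2 ≤ n) (α : ℝ) (hα1 : 1 / (n : ℝ) ≤ α) (hα2 : α ≤ 1)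
    (r : ℝ) (hr : 0 < r) :
    ML α 1 r ≥ (1 / r ^ (n - 1)) * ML α α r
      - (1 / r ^ (n - 1)) * ∑ k ∈ Finset.range (⌊(n : ℝ) - 1 + 1 / (2 * α)⌋.toNat + 1),
          (1 / Real.Gamma (α + k * α)) * r ^ k
      + (1 / r ^ (n - 1)) * ∑ k ∈ Finset.Icc (n - 1) ⌊(n : ℝ) - 1 + 1 / (2 * α)⌋.toNat,
          (1 / Real.Gamma (1 + k * α - α * ((n : ℝ) - 1))) * r ^ k :=
  stmt5_general n hn α hα1 r hr
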